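/- arXiv:2312.01821 — 6 statements merged into one kernel-verified Lean document; each statement's English description precedes it below -/
import Mathlib

section
/- The Accola-Maclachlan group AM_g = ⟨a,b | a^{2g+2} = b^4 = (ab)^2 = [a,b^2] = 1⟩ has order 8g+8 for every g ≥ 2. -/
/-- The relators of the Accola–Maclachlan group
`AM_g = ⟨a, b | a^(2g+2) = b^4 = (ab)^2 = [a,b^2] = 1⟩`,
where `[x,y] = x⁻¹y⁻¹xy`, as elements of the free group on two generators
(`0` plays the role of `a`, `1` the role of `b`). -/
def amRels (g : ℕ) : Set (FreeGroup (Fin 2)) :=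
  { (FreeGroup.of 0) ^ (2 * g + 2),
    (FreeGroup.of 1) ^ 4,
    (FreeGroup.of 0 * FreeGroup.of 1) ^ 2,
    (FreeGroup.of 0)⁻¹ * ((FreeGroup.of 1) ^ 2)⁻¹ * FreeGroup.of 0 * (FreeGroup.of 1) ^ 2 }

/-!
Since `(ab)² = 1` gives `ba = a⁻¹b⁻¹` and `b²` commutes with `a`, every `bʲa` can be rewritten
as some `aⁱbᵏ`; hence every element of `AM_g` is `aⁱbʲ` with `i < 2g + 2`, `j < 4`, and
`|AM_g| ≤ 8g + 8`. Conversely `a ↦ r`, `b ↦ s` maps `AM_g` onto the dihedral group `D_{2g+2}`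
of order `4g + 4`, and `b²` lies in the kernel; it is not trivial, because `a ↦ s`, `b ↦ r`
maps it to `r² ≠ 1` in `D_4`. So `|AM_g| ≥ 2 (4g + 4)`.
-/

open DihedralGroup

section NormalForm

variable {G : Type*} [Group G] {x y : G}

theorem exists_pow_mul_pow_eq_of_closure_eq_top (hx : IsOfFinOrder x) (hy : IsOfFinOrder y)
    (hgen : Subgroup.closure {x, y} = ⊤) (hyx : ∀ b : ℕ, ∃ a c : ℕ, y ^ b * x = x ^ a * y ^ c)
    (p : G) : ∃ a b : ℕ, x ^ a * y ^ b = p := by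
  have hmon : Submonoid.closure {x, y} = ⊤ := by
    rw [← Subgroup.closure_toSubmonoid_of_isOfFinOrder (by simp [hx, hy]), hgen]
    rfl
  induction p using Submonoid.induction_of_closure_eq_top_right hmon with
  | one => exact ⟨0, 0, by simp⟩
  | mul_right p s hs ih =>
    obtain ⟨a, b, rfl⟩ := ih
    rcases hs with rfl | rfl
    · obtain ⟨a', c, hba⟩ := hyx b
      exact ⟨a + a', c, by rw [mul_assoc, hba, ← mul_assoc, pow_add]⟩
    · exact ⟨a, b + 1, by rw [pow_succ, mul_assoc]⟩

theorem surjective_pow_mul_pow_of_forall_exists {n m : ℕ} [NeZero n] [NeZero m]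
    (hx : x ^ n = 1) (hy : y ^ m = 1) (h : ∀ p : G, ∃ a b : ℕ, x ^ a * y ^ b = p) :
    Function.Surjective fun ij : Fin n × Fin m => x ^ (ij.1 : ℕ) * y ^ (ij.2 : ℕ) := by
  intro p
  obtain ⟨a, b, rfl⟩ := h p
  exact ⟨(Fin.ofNat n a, Fin.ofNat m b), by simp [← pow_eq_pow_mod a hx, ← pow_eq_pow_mod b hy]⟩

end NormalForm

theorem MonoidHom.two_mul_card_le_of_surjective {G H : Type*} [Group G] [Group H] [Finite G]
    (f : G →* H) (hf : Function.Surjective f) (hker : f.ker ≠ ⊥) :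
    2 * Nat.card H ≤ Nat.card G := by
  rw [f.ker.card_eq_card_quotient_mul_card_subgroup,
    Nat.card_congr (QuotientGroup.quotientKerEquivOfSurjective f hf).toEquiv, mul_comm]
  exact Nat.mul_le_mul_left _ (f.ker.one_lt_card_iff_ne_bot.mpr hker)

theorem DihedralGroup.closure_r_one_sr_zero (n : ℕ) [NeZero n] :
    Subgroup.closure {r 1, sr 0} = (⊤ : Subgroup (DihedralGroup n)) := by
  have hr : ∀ i : ZMod n, r i ∈ Subgroup.closure {r 1, sr 0} := fun i => by
    rw [← ZMod.natCast_zmod_val i, ← r_one_pow]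
    exact pow_mem (Subgroup.subset_closure (by simp)) _
  refine eq_top_iff.mpr fun p _ => ?_
  cases p with
  | r i => exact hr i
  | sr i =>
    rw [show sr i = sr 0 * r i by simp]
    exact mul_mem (Subgroup.subset_closure (by simp)) (hr i)

structure IsAMPair {G : Type*} [Group G] (g : ℕ) (a b : G) : Prop where
  pow_left : a ^ (2 * g + 2) = 1
  pow_right : b ^ 4 = 1
  mul_sq : (a * b) ^ 2 = 1
  commute_sq : Commute a (b ^ 2)

theorem isAMPair_iff_lift_eq_one {G : Type*} [Group G] {g : ℕ} {a b : G} :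
    IsAMPair g a b ↔ ∀ r ∈ amRels g, FreeGroup.lift ![a, b] r = 1 := by
  have hcomm : a⁻¹ * (b ^ 2)⁻¹ * a * b ^ 2 = 1 ↔ Commute a (b ^ 2) := by
    rw [mul_assoc, mul_assoc, inv_mul_eq_one, eq_inv_mul_iff_mul_eq, eq_comm]
    rfl
  simp only [amRels, Set.forall_mem_insert, Set.mem_singleton_iff, forall_eq, map_mul, map_inv,
    map_pow, FreeGroup.lift_apply_of, Matrix.cons_val_zero, Matrix.cons_val_one, hcomm]
  exact ⟨fun h => ⟨h.1, h.2, h.3, h.4⟩, fun ⟨h1, h2, h3, h4⟩ => ⟨h1, h2, h3, h4⟩⟩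

namespace IsAMPair

variable {G : Type*} [Group G] {g : ℕ} {a b : G}

theorem pow_odd_mul (h : IsAMPair g a b) (k : ℕ) :
    b ^ (2 * k + 1) * a = a ^ (2 * g + 1) * b ^ (2 * k + 3) := by
  have ha : a⁻¹ = a ^ (2 * g + 1) := inv_eq_of_mul_eq_one_left (by rw [← pow_succ, h.pow_left])
  have hb : b⁻¹ = b ^ 3 := inv_eq_of_mul_eq_one_left (by rw [← pow_succ, h.pow_right])
  have hba : b * a = a⁻¹ * b⁻¹ :=
    calc b * a = a⁻¹ * (a * b * (a * b)) * b⁻¹ := by group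
      _ = a⁻¹ * b⁻¹ := by rw [← sq, h.mul_sq, mul_one]
  calc b ^ (2 * k + 1) * a = b ^ (2 * k) * a⁻¹ * b⁻¹ := by rw [pow_succ, mul_assoc, hba, mul_assoc]
    _ = a⁻¹ * b ^ (2 * k) * b⁻¹ := by rw [pow_mul, (h.commute_sq.pow_right k).inv_left.eq]
    _ = a ^ (2 * g + 1) * b ^ (2 * k + 3) := by rw [ha, hb, mul_assoc, ← pow_add]

theorem exists_pow_mul_eq (h : IsAMPair g a b) (c : ℕ) :
    ∃ i j : ℕ, b ^ c * a = a ^ i * b ^ j := by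
  obtain ⟨k, rfl | rfl⟩ := Nat.even_or_odd' c
  · exact ⟨1, 2 * k, by rw [pow_one, pow_mul, (h.commute_sq.pow_right k).eq]⟩
  · exact ⟨_, _, h.pow_odd_mul k⟩

theorem surjective_pow_mul_pow (h : IsAMPair g a b) (hgen : Subgroup.closure {a, b} = ⊤) :
    Function.Surjective fun ij : Fin (2 * g + 2) × Fin 4 => a ^ (ij.1 : ℕ) * b ^ (ij.2 : ℕ) :=
  surjective_pow_mul_pow_of_forall_exists h.pow_left h.pow_right <|
    exists_pow_mul_pow_eq_of_closure_eq_top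
      (isOfFinOrder_iff_pow_eq_one.mpr ⟨_, by omega, h.pow_left⟩)
      (isOfFinOrder_iff_pow_eq_one.mpr ⟨_, by omega, h.pow_right⟩) hgen h.exists_pow_mul_eq

def lift (h : IsAMPair g a b) : PresentedGroup (amRels g) →* G :=
  PresentedGroup.toGroup (isAMPair_iff_lift_eq_one.mp h)

@[simp]
theorem lift_of_zero (h : IsAMPair g a b) : h.lift (PresentedGroup.of 0) = a :=
  PresentedGroup.toGroup.of _

@[simp]
theorem lift_of_one (h : IsAMPair g a b) : h.lift (PresentedGroup.of 1) = b :=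
  PresentedGroup.toGroup.of _

end IsAMPair

theorem isAMPair_of_zero_of_one (g : ℕ) :
    IsAMPair g (PresentedGroup.of 0 : PresentedGroup (amRels g)) (PresentedGroup.of 1) := by
  have hlift : FreeGroup.lift ![PresentedGroup.of 0, PresentedGroup.of 1] =
      PresentedGroup.mk (amRels g) := by
    ext i
    fin_cases i <;> rfl
  exact isAMPair_iff_lift_eq_one.mpr fun r hr => hlift ▸ PresentedGroup.one_of_mem hr

theorem PresentedGroup.closure_of_zero_of_one {rels : Set (FreeGroup (Fin 2))} :
    Subgroup.closure {of 0, of 1} = (⊤ : Subgroup (PresentedGroup rels)) := by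
  rw [← closure_range_of]
  congr
  ext
  simp [Fin.exists_fin_two, eq_comm]

theorem DihedralGroup.isAMPair_r_one_sr_zero (g : ℕ) :
    IsAMPair g (r 1 : DihedralGroup (2 * g + 2)) (sr 0) where
  pow_left := by simp
  pow_right := by simp [pow_succ]
  mul_sq := by simp [sq]
  commute_sq := by simp [sq]

theorem DihedralGroup.isAMPair_sr_zero_r_one (g : ℕ) :
    IsAMPair g (sr 0 : DihedralGroup 4) (r 1) where
  pow_left := by simp [pow_add, pow_mul, sq]
  pow_right := by simp; rfl
  mul_sq := by simp [sq]
  commute_sq := by simp [sq, Commute, SemiconjBy]; decide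

theorem DihedralGroup.lift_r_one_sr_zero_surjective (g : ℕ) :
    Function.Surjective (isAMPair_r_one_sr_zero g).lift := by
  rw [← MonoidHom.range_eq_top, eq_top_iff, ← closure_r_one_sr_zero, Subgroup.closure_le]
  rintro _ (rfl | rfl)
  exacts [⟨PresentedGroup.of 0, by simp⟩, ⟨PresentedGroup.of 1, by simp⟩]

theorem amRels_of_one_sq_mem_ker (g : ℕ) :
    PresentedGroup.of 1 ^ 2 ∈ (isAMPair_r_one_sr_zero g).lift.ker := by
  simp [sq]

theorem amRels_of_one_sq_ne_one (g : ℕ) :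
    (PresentedGroup.of 1 : PresentedGroup (amRels g)) ^ 2 ≠ 1 := by
  intro h
  have hr := congrArg (isAMPair_sr_zero_r_one g).lift h
  simp only [map_pow, IsAMPair.lift_of_one, map_one, r_one_pow] at hr
  exact absurd hr (by decide)

theorem accola_maclachlan_group_card_general (g : ℕ) :
    Nat.card (PresentedGroup (amRels g)) = 8 * g + 8 := by
  have hsurj := (isAMPair_of_zero_of_one g).surjective_pow_mul_pow PresentedGroup.closure_of_zero_of_one
  have : Finite (PresentedGroup (amRels g)) := .of_surjective _ hsurj
  have upper := Nat.card_le_card_of_surjective _ hsurj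
  have hker : (isAMPair_r_one_sr_zero g).lift.ker ≠ ⊥ :=
    Subgroup.ne_bot_iff_exists_ne_one.mpr ⟨⟨_, amRels_of_one_sq_mem_ker g⟩,
      fun h => amRels_of_one_sq_ne_one g (congrArg Subtype.val h)⟩
  have lower := MonoidHom.two_mul_card_le_of_surjective _ (lift_r_one_sr_zero_surjective g) hker
  rw [Nat.card_prod, Nat.card_fin, Nat.card_fin] at upper
  rw [nat_card] at lower
  omega

/-- The Accola–Maclachlan group `AM_g` has order `8g + 8` for every `g ≥ 2`. -/
theorem accola_maclachlan_group_card (g : ℕ) (hg : 2 ≤ g) :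
    Nat.card (PresentedGroup (amRels g)) = 8 * g + 8 :=
  accola_maclachlan_group_card_general g
end

section
/- Let a = (r₁r₂, 0) and b = (r₂, e₁) in the semidirect product D_{2g+2} ⋉ (ℤ/2)² (with r₁ acting trivially and r₂ by swapping coordinates). Then the subgroup generated by a and b has order 8g+8 and is isomorphic to the Accola-Maclachlan group AM_g. -/
/-- The Klein four group `(ℤ/2)²`, written multiplicatively. -/
abbrev V2 : Type := Multiplicative (ZMod 2) × Multiplicative (ZMod 2)

/-- `e₁ = (1,0) ∈ (ℤ/2)²`. -/
def e₁ : V2 := (Multiplicative.ofAdd 1, 1)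

open Subgroup
open scoped Pointwise

section NormalForm

variable {G : Type*} [Group G] {x y : G}

theorem mul_zpow_eq_zpow_neg_mul_zpow (hy : y ^ 4 = 1) (hxy : (x * y) ^ 2 = 1)
    (hc : Commute x (y ^ 2)) (k : ℤ) : y * x ^ k = x ^ (-k) * y ^ (2 * k + 1) := by
  have hyxy : y * x * y = x⁻¹ := eq_inv_of_mul_eq_one_right <| by
    rw [← hxy, pow_two]; group
  have hconj : y * x * y⁻¹ = x⁻¹ * y ^ 2 := by
    have hy_inv : y⁻¹ = y ^ 3 := inv_eq_of_mul_eq_one_right <| by rw [← pow_succ', hy]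
    rw [hy_inv, ← hyxy]; group
  calc y * x ^ k = (y * x * y⁻¹) ^ k * y := by rw [conj_zpow]; group
    _ = x ^ (-k) * y ^ (2 * k + 1) := by
      rw [hconj, hc.inv_left.mul_zpow, ← zpow_natCast, ← zpow_mul, mul_assoc, ← zpow_add_one,
        inv_zpow', Nat.cast_ofNat]

theorem closure_pair_subset_zpowers_mul_zpowers (hy : y ^ 4 = 1) (hxy : (x * y) ^ 2 = 1)
    (hc : Commute x (y ^ 2)) : (closure {x, y} : Set G) ⊆ (zpowers x : Set G) * zpowers y := by
  let S : Set G := {z | ∃ i j : ℤ, x ^ i * y ^ j = z}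
  have x_mul : ∀ z ∈ S, x * z ∈ S := by
    rintro _ ⟨i, j, rfl⟩; exact ⟨1 + i, j, by group⟩
  have x_inv_mul : ∀ z ∈ S, x⁻¹ * z ∈ S := by
    rintro _ ⟨i, j, rfl⟩; exact ⟨-1 + i, j, by group⟩
  have y_mul : ∀ z ∈ S, y * z ∈ S := by
    rintro _ ⟨i, j, rfl⟩
    exact ⟨-i, 2 * i + 1 + j, by
      rw [← mul_assoc, mul_zpow_eq_zpow_neg_mul_zpow hy hxy hc, mul_assoc, ← zpow_add]⟩
  have y_inv_mul : ∀ z ∈ S, y⁻¹ * z ∈ S := fun z hz => by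
    have hy_inv : y⁻¹ = y ^ 3 := inv_eq_of_mul_eq_one_right <| by rw [← pow_succ', hy]
    rw [hy_inv, pow_three, mul_assoc, mul_assoc]
    exact y_mul _ (y_mul _ (y_mul _ hz))
  intro z hz
  obtain ⟨i, j, rfl⟩ : z ∈ S := by
    induction hz using closure_induction_left with
    | one => exact ⟨0, 0, by group⟩
    | mul_left w hw z _ ih => rcases hw with rfl | rfl; exacts [x_mul _ ih, y_mul _ ih]
    | inv_mul_cancel w hw z _ ih =>
      rcases hw with rfl | rfl; exacts [x_inv_mul _ ih, y_inv_mul _ ih]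
  exact Set.mul_mem_mul (zpow_mem_zpowers x i) (zpow_mem_zpowers y j)

theorem finite_closure_pair (hx : IsOfFinOrder x) (hy : y ^ 4 = 1) (hxy : (x * y) ^ 2 = 1)
    (hc : Commute x (y ^ 2)) : Finite (closure {x, y}) := by
  have hfin : ((zpowers x : Set G) * (zpowers y : Set G)).Finite :=
    hx.finite_zpowers.mul (isOfFinOrder_iff_pow_eq_one.2 ⟨4, by norm_num, hy⟩).finite_zpowers
  exact (hfin.subset (closure_pair_subset_zpowers_mul_zpowers hy hxy hc)).to_subtype

theorem card_closure_pair_le {n : ℕ} (hn : 0 < n) (hx : x ^ n = 1) (hy : y ^ 4 = 1)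
    (hxy : (x * y) ^ 2 = 1) (hc : Commute x (y ^ 2)) : Nat.card (closure {x, y}) ≤ n * 4 := by
  have hfin : ((zpowers x : Set G) * (zpowers y : Set G)).Finite :=
    (isOfFinOrder_iff_pow_eq_one.2 ⟨n, hn, hx⟩).finite_zpowers.mul
      (isOfFinOrder_iff_pow_eq_one.2 ⟨4, by norm_num, hy⟩).finite_zpowers
  calc Nat.card (closure {x, y})
      ≤ Nat.card ((zpowers x : Set G) * (zpowers y : Set G)) :=
        Nat.card_mono hfin (closure_pair_subset_zpowers_mul_zpowers hy hxy hc)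
    _ ≤ Nat.card (zpowers x) * Nat.card (zpowers y) := Set.natCard_mul_le
    _ ≤ n * 4 := by
      rw [Nat.card_zpowers, Nat.card_zpowers]
      exact Nat.mul_le_mul (orderOf_le_of_pow_eq_one hn hx)
        (orderOf_le_of_pow_eq_one (by norm_num) hy)

end NormalForm

section AccolaMaclachlan

variable {G : Type*} [Group G] {g : ℕ}

theorem lift_amRels_eq_one_iff {x y : G} :
    (∀ r ∈ amRels g, FreeGroup.lift ![x, y] r = 1) ↔
      x ^ (2 * g + 2) = 1 ∧ y ^ 4 = 1 ∧ (x * y) ^ 2 = 1 ∧ Commute x (y ^ 2) := by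
  simp only [amRels, Set.mem_insert_iff, Set.mem_singleton_iff, forall_eq_or_imp, forall_eq,
    map_pow, map_mul, map_inv, FreeGroup.lift_apply_of, Matrix.cons_val_zero,
    Matrix.cons_val_one]
  rw [← Commute.inv_inv_iff, ← commutatorElement_eq_one_iff_commute, commutatorElement_def,
    inv_inv, inv_inv]

theorem am_relations_presentedGroup :
    (PresentedGroup.of 0 : PresentedGroup (amRels g)) ^ (2 * g + 2) = 1 ∧
      (PresentedGroup.of 1 : PresentedGroup (amRels g)) ^ 4 = 1 ∧
      (PresentedGroup.of 0 * PresentedGroup.of 1 : PresentedGroup (amRels g)) ^ 2 = 1 ∧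
      Commute (PresentedGroup.of 0 : PresentedGroup (amRels g)) (PresentedGroup.of 1 ^ 2) := by
  have hmk : FreeGroup.lift ![PresentedGroup.of 0, PresentedGroup.of 1] =
      PresentedGroup.mk (amRels g) :=
    FreeGroup.ext_hom _ _ fun i => by fin_cases i <;> rfl
  exact lift_amRels_eq_one_iff.1 fun r hr => hmk ▸ PresentedGroup.one_of_mem hr

theorem closure_of_amRels_eq_top : closure {PresentedGroup.of 0, PresentedGroup.of 1} =
    (⊤ : Subgroup (PresentedGroup (amRels g))) := by
  refine eq_top_iff.2 <| PresentedGroup.closure_range_of (amRels g) ▸ closure_mono ?_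
  rintro _ ⟨i, rfl⟩
  fin_cases i <;> simp

theorem finite_presentedGroup_amRels : Finite (PresentedGroup (amRels g)) := by
  obtain ⟨hx, hy, hxy, hc⟩ := am_relations_presentedGroup (g := g)
  have := finite_closure_pair (isOfFinOrder_iff_pow_eq_one.2 ⟨_, by omega, hx⟩) hy hxy hc
  rw [closure_of_amRels_eq_top] at this
  exact Finite.of_equiv _ topEquiv.toEquiv

theorem card_presentedGroup_amRels_le : Nat.card (PresentedGroup (amRels g)) ≤ 8 * g + 8 := by
  obtain ⟨hx, hy, hxy, hc⟩ := am_relations_presentedGroup (g := g)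
  have := card_closure_pair_le (by omega) hx hy hxy hc
  rw [closure_of_amRels_eq_top, card_top] at this
  omega

end AccolaMaclachlan

theorem MonoidHom.card_inf_ker_mul_card_map {G G' : Type*} [Group G] [Group G'] (f : G →* G')
    (K : Subgroup G) : Nat.card ↥(f.ker ⊓ K) * Nat.card (K.map f) = Nat.card K := by
  rw [← relIndex_bot_left, ← relIndex_ker, relIndex_inf_mul_relIndex, bot_inf_eq,
    relIndex_bot_left]

theorem DihedralGroup.closure_r_one_sr_one (n : ℕ) :
    closure {r 1, sr 1} = (⊤ : Subgroup (DihedralGroup n)) := by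
  have hr : ∀ i : ZMod n, r i ∈ closure {r 1, sr 1} := fun i => by
    rw [← ZMod.intCast_zmod_cast i, ← r_one_zpow]
    exact zpow_mem (subset_closure (Set.mem_insert _ _)) _
  refine eq_top_iff.2 fun x _ => ?_
  rcases x with i | i
  · exact hr i
  · rw [← add_sub_cancel 1 i, ← sr_mul_r]
    exact mul_mem (subset_closure (Set.mem_insert_of_mem _ rfl)) (hr _)

def v₁₂ : V2 := (Multiplicative.ofAdd 1, Multiplicative.ofAdd 1)

section Semidirect

variable {n : ℕ} {φ : DihedralGroup n →* MulAut V2}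

open DihedralGroup SemidirectProduct

theorem mk_e₁_sr_one_sq (h1 : φ (sr 1) = MulEquiv.prodComm) :
    (⟨e₁, sr 1⟩ : V2 ⋊[φ] DihedralGroup n) ^ 2 = inl v₁₂ := by
  apply SemidirectProduct.ext
  · rw [pow_two, mul_left, h1]
    exact (by decide : e₁ * MulEquiv.prodComm e₁ = v₁₂)
  · rw [pow_two, mul_right, sr_mul_sr, sub_self, r_zero, right_inl]

theorem am_relations_semidirect (h0 : φ (sr 0) = 1) (h1 : φ (sr 1) = MulEquiv.prodComm) :
    let a : V2 ⋊[φ] DihedralGroup n := ⟨1, r 1⟩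
    let b : V2 ⋊[φ] DihedralGroup n := ⟨e₁, sr 1⟩
    a ^ n = 1 ∧ b ^ 4 = 1 ∧ (a * b) ^ 2 = 1 ∧ Commute a (b ^ 2) := by
  intro a b
  have hr1 : φ (r 1) = MulEquiv.prodComm := by
    rw [← sub_zero (1 : ZMod n), ← sr_mul_sr, map_mul, h0, h1, one_mul]
  have ha : a = inr (r 1) := rfl
  have hb2 := mk_e₁_sr_one_sq h1
  refine ⟨?_, ?_, ?_, ?_⟩
  · rw [ha, ← map_pow, r_one_pow_n, map_one]
  · rw [show 4 = 2 * 2 from rfl, pow_mul, hb2, ← map_pow]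
    exact (by decide : v₁₂ ^ 2 = 1) ▸ map_one _
  · have hab : a * b = ⟨MulEquiv.prodComm e₁, sr 0⟩ := by
      apply SemidirectProduct.ext
      · rw [mul_left, hr1]; exact one_mul _
      · exact (r_mul_sr 1 1).trans (congrArg sr (sub_self 1))
    rw [hab, pow_two]
    apply SemidirectProduct.ext
    · rw [mul_left, h0]
      exact (by decide : MulEquiv.prodComm e₁ * MulEquiv.prodComm e₁ = 1)
    · exact sr_mul_self 0
  · rw [ha, hb2]
    calc inr (r 1) * inl v₁₂
        = inl (φ (r 1) v₁₂) * inr (r 1) := by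
          rw [inl_aut, map_inv, inv_mul_cancel_right]
      _ = inl v₁₂ * inr (r 1) := by rw [hr1]; rfl

theorem le_card_closure_semidirect [NeZero n] (h1 : φ (sr 1) = MulEquiv.prodComm) :
    let a : V2 ⋊[φ] DihedralGroup n := ⟨1, r 1⟩
    let b : V2 ⋊[φ] DihedralGroup n := ⟨e₁, sr 1⟩
    4 * n ≤ Nat.card (closure {a, b}) := by
  intro a b
  have : Finite (V2 ⋊[φ] DihedralGroup n) := Finite.of_equiv _ equivProd.symm
  have hmap : (closure {a, b}).map rightHom = ⊤ := by
    rw [MonoidHom.map_closure, Set.image_pair]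
    exact closure_r_one_sr_one n
  have hker : 2 ≤ Nat.card ↥(rightHom.ker ⊓ closure {a, b}) := by
    refine (one_lt_card_iff_ne_bot _).2 fun hbot => ?_
    have hmem : b ^ 2 ∈ rightHom.ker ⊓ closure {a, b} :=
      mem_inf.2 ⟨by rw [MonoidHom.mem_ker, mk_e₁_sr_one_sq h1, rightHom_inl],
        pow_mem (subset_closure (Set.mem_insert_of_mem _ (Set.mem_singleton b))) 2⟩
    rw [hbot, mem_bot, mk_e₁_sr_one_sq h1, ← map_one inl, inl_inj] at hmem
    exact (by decide : v₁₂ ≠ 1) hmem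
  rw [← rightHom.card_inf_ker_mul_card_map, hmap, card_top, nat_card]
  calc 4 * n = 2 * (2 * n) := by ring
    _ ≤ _ := Nat.mul_le_mul_right _ hker

end Semidirect

theorem MonoidHom.nonempty_mulEquiv_of_range_eq {P G : Type*} [Group P] [Group G] [Finite P]
    (f : P →* G) {K : Subgroup G} (hf : f.range = K) (hcard : Nat.card P ≤ Nat.card K) :
    Nonempty (K ≃* P) := by
  have hbij : Function.Bijective f.rangeRestrict :=
    (Nat.bijective_iff_surjective_and_card _).2 ⟨f.rangeRestrict_surjective,
      le_antisymm (hf ▸ hcard) (Nat.card_le_card_of_surjective _ f.rangeRestrict_surjective)⟩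
  exact ⟨(MulEquiv.subgroupCongr hf).symm.trans
    (MonoidHom.ofInjective (rangeRestrict_injective_iff.1 hbij.1)).symm⟩

theorem am_subgroup_of_semidirect_general (g : ℕ)
    (φ : DihedralGroup (2 * g + 2) →* MulAut V2)
    (h0 : φ (DihedralGroup.sr 0) = 1)
    (h1 : φ (DihedralGroup.sr 1) = (MulEquiv.prodComm : V2 ≃* V2)) :
    let a : V2 ⋊[φ] DihedralGroup (2 * g + 2) := ⟨1, DihedralGroup.r 1⟩
    let b : V2 ⋊[φ] DihedralGroup (2 * g + 2) := ⟨e₁, DihedralGroup.sr 1⟩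
    Nat.card (Subgroup.closure {a, b}) = 8 * g + 8 ∧
      Nonempty ((Subgroup.closure {a, b}) ≃* PresentedGroup (amRels g)) := by
  intro a b
  have : NeZero (2 * g + 2) := ⟨by omega⟩
  let f : PresentedGroup (amRels g) →* V2 ⋊[φ] DihedralGroup (2 * g + 2) :=
    PresentedGroup.toGroup (lift_amRels_eq_one_iff.2 (am_relations_semidirect h0 h1))
  have hrange : f.range = closure {a, b} := by
    rw [MonoidHom.range_eq_map, ← closure_of_amRels_eq_top, MonoidHom.map_closure,
      Set.image_pair, PresentedGroup.toGroup.of, PresentedGroup.toGroup.of]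
    rfl
  have := finite_presentedGroup_amRels (g := g)
  have hcard : Nat.card (closure {a, b}) = 8 * g + 8 := by
    refine le_antisymm ?_ ?_
    · calc Nat.card (closure {a, b}) = Nat.card f.range := by rw [hrange]
        _ ≤ Nat.card (PresentedGroup (amRels g)) :=
          Nat.card_le_card_of_surjective _ f.rangeRestrict_surjective
        _ ≤ 8 * g + 8 := card_presentedGroup_amRels_le
    · have : 4 * (2 * g + 2) ≤ Nat.card (closure {a, b}) := le_card_closure_semidirect h1
      omega
  exact ⟨hcard, f.nonempty_mulEquiv_of_range_eq hrange (hcard ▸ card_presentedGroup_amRels_le)⟩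

/-- In the semidirect product `D_{2g+2} ⋉ (ℤ/2)²` (with `r₁ = sr 0` acting trivially
and `r₂ = sr 1` swapping the coordinates), the subgroup generated by
`a = (r₁r₂, 0)` and `b = (r₂, e₁)` has order `8g + 8` and is isomorphic to the
Accola–Maclachlan group `AM_g`. -/
theorem am_subgroup_of_semidirect (g : ℕ) (hg : 2 ≤ g)
    (φ : DihedralGroup (2 * g + 2) →* MulAut V2)
    (h0 : φ (DihedralGroup.sr 0) = 1)
    (h1 : φ (DihedralGroup.sr 1) = (MulEquiv.prodComm : V2 ≃* V2)) :
    let a : V2 ⋊[φ] DihedralGroup (2 * g + 2) := ⟨1, DihedralGroup.r 1⟩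
    let b : V2 ⋊[φ] DihedralGroup (2 * g + 2) := ⟨e₁, DihedralGroup.sr 1⟩
    Nat.card (Subgroup.closure {a, b}) = 8 * g + 8 ∧
      Nonempty ((Subgroup.closure {a, b}) ≃* PresentedGroup (amRels g)) :=
  am_subgroup_of_semidirect_general g φ h0 h1
end

section
/- Consider D_{4g} ⋉ (ℤ/2)² (r₁ trivial action, r₂ swapping) and the central involution c = ((r₁r₂)^{2g}, e₁+e₂). There exists an element φ = (s, v) with φ² = c and s = (r₁r₂)^{±g} if and only if g is odd. -/
/-- `e₁ + e₂ = (1,1) ∈ (ℤ/2)²`. -/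
def e₁e₂ : V2 := (Multiplicative.ofAdd 1, Multiplicative.ofAdd 1)

/-!
Write `σ` for the coordinate swap. Since `r₁` acts trivially and `r₂` by `σ`, the rotation
`(r₁r₂)^k` acts by `σ^k`. The square of `(v, s)` has `(ℤ/2)²`-component `v + s • v`.
If `g` is even then `(r₁r₂)^(±g)` acts trivially, so this component is `2v = 0 ≠ e₁ + e₂`;
if `g` is odd it acts by `σ`, and `v = e₂` gives `e₂ + e₁`.
-/

open DihedralGroup

lemma Even.pow_eq_one_of_sq_eq_one {M : Type*} [Monoid M] {a : M} (ha : a ^ 2 = 1) {k : ℕ}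
    (hk : Even k) : a ^ k = 1 := by
  obtain ⟨m, rfl⟩ := hk
  rw [← two_mul, pow_mul, ha, one_pow]

lemma Odd.pow_eq_self_of_sq_eq_one {M : Type*} [Monoid M] {a : M} (ha : a ^ 2 = 1) {k : ℕ}
    (hk : Odd k) : a ^ k = a := by
  obtain ⟨m, rfl⟩ := hk
  rw [pow_succ, pow_mul, ha, one_pow, one_mul]

lemma MulEquiv.prodComm_sq {M : Type*} [MulOneClass M] :
    ((MulEquiv.prodComm : M × M ≃* M × M) : MulAut (M × M)) ^ 2 = 1 := by
  ext <;> rfl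

lemma DihedralGroup.map_r_natCast {n : ℕ} {G : Type*} [Monoid G] (ψ : DihedralGroup n →* G)
    (h0 : ψ (sr 0) = 1) (k : ℕ) : ψ (r k) = ψ (sr 1) ^ k := by
  have hr1 : r (1 : ZMod n) = sr 0 * sr 1 := by rw [sr_mul_sr, sub_zero]
  rw [← r_one_pow, map_pow, hr1, map_mul, h0, one_mul]

lemma V2.mul_self_ne_e₁e₂ (v : V2) : v * v ≠ e₁e₂ := by
  revert v; decide

lemma V2.mul_prodComm_ofAdd_one : ((1, Multiplicative.ofAdd 1) : V2) *
    MulEquiv.prodComm ((1, Multiplicative.ofAdd 1) : V2) = e₁e₂ := by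
  decide

theorem wiman_square_root_iff_odd_general (g : ℕ)
    (φ : DihedralGroup (4 * g) →* MulAut V2)
    (h0 : φ (DihedralGroup.sr 0) = 1)
    (h1 : φ (DihedralGroup.sr 1) = (MulEquiv.prodComm : V2 ≃* V2)) :
    let c : V2 ⋊[φ] DihedralGroup (4 * g) :=
      ⟨e₁e₂, DihedralGroup.r ((2 * g : ℕ) : ZMod (4 * g))⟩
    (∃ x : V2 ⋊[φ] DihedralGroup (4 * g),
        (x.right = DihedralGroup.r ((g : ℕ) : ZMod (4 * g)) ∨
          x.right = DihedralGroup.r (-((g : ℕ) : ZMod (4 * g)))) ∧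
        x * x = c) ↔ Odd g := by
  intro c
  have hrg : φ (r g) = MulEquiv.prodComm ^ g := by rw [map_r_natCast φ h0, h1]
  constructor
  · rintro ⟨x, hx, hsq⟩
    by_contra hodd
    have hrg_one : φ (r g) = 1 := by
      rw [hrg, (Nat.not_odd_iff_even.mp hodd).pow_eq_one_of_sq_eq_one MulEquiv.prodComm_sq]
    have hx_one : φ x.right = 1 := by
      rcases hx with hx | hx <;> rw [hx]
      · exact hrg_one
      · rw [← inv_r, map_inv, hrg_one, inv_one]
    have hleft := congrArg SemidirectProduct.left hsq
    rw [SemidirectProduct.mul_left, hx_one, MulAut.one_apply] at hleft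
    exact V2.mul_self_ne_e₁e₂ _ hleft
  · intro hodd
    refine ⟨⟨(1, Multiplicative.ofAdd 1), r g⟩, Or.inl rfl, ?_⟩
    have hrg_swap : φ (r g) = MulEquiv.prodComm := by
      rw [hrg, hodd.pow_eq_self_of_sq_eq_one MulEquiv.prodComm_sq]
    ext : 1
    · rw [SemidirectProduct.mul_left, hrg_swap]
      exact V2.mul_prodComm_ofAdd_one
    · rw [SemidirectProduct.mul_right, r_mul_r]
      show r _ = r ((2 * g : ℕ) : ZMod (4 * g))
      rw [Nat.cast_mul, Nat.cast_two, two_mul]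

/-- In `D_{4g} ⋉ (ℤ/2)²` (with `r₁ = sr 0` acting trivially and `r₂ = sr 1` swapping
the coordinates), consider the central involution `c = ((r₁r₂)^(2g), e₁ + e₂)`.
There exists an element `φ' = (s, v)` with `s = (r₁r₂)^(±g)` and `φ'² = c`
if and only if `g` is odd. -/
theorem wiman_square_root_iff_odd (g : ℕ) (hg : 3 ≤ g)
    (φ : DihedralGroup (4 * g) →* MulAut V2)
    (h0 : φ (DihedralGroup.sr 0) = 1)
    (h1 : φ (DihedralGroup.sr 1) = (MulEquiv.prodComm : V2 ≃* V2)) :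
    let c : V2 ⋊[φ] DihedralGroup (4 * g) :=
      ⟨e₁e₂, DihedralGroup.r ((2 * g : ℕ) : ZMod (4 * g))⟩
    (∃ x : V2 ⋊[φ] DihedralGroup (4 * g),
        (x.right = DihedralGroup.r ((g : ℕ) : ZMod (4 * g)) ∨
          x.right = DihedralGroup.r (-((g : ℕ) : ZMod (4 * g)))) ∧
        x * x = c) ↔ Odd g :=
  wiman_square_root_iff_odd_general g φ h0 h1
end

section
/- Let G = D_{2g+2} ⋉ (ℤ/2)³ with the action Φ given by Φ(r₁) = [[1,1,0],[0,1,0],[0,1,1]] and Φ(r₂) = [[0,1,1],[1,0,1],[0,0,1]] over 𝔽₂, for g ≡ 3 (mod 4). Then d = ((r₁r₂)^{g+1}, e₁+e₃) is a central involution of the subgroup generated by x = (r₁, e₁) and z = (r₂, e₁). -/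
/-!
The rotation `(r₁r₂)^(g+1)` is the central rotation of `D_{2g+2}`, and it acts trivially on
`(ℤ/2)³` because `Φ(r₁r₂) = M1 * M2` has order dividing 4 and `4 ∣ g + 1`. The vector
`e₁ + e₃` is fixed by both `M1` and `M2`, so in the semidirect product `d` commutes with every
element whose dihedral part is `r₁` or `r₂`; and `d² = 1` because `e₁ + e₃` has order 2.
-/

/-- The matrix `Φ(r₁)` over `𝔽₂`. -/
def M1 : Matrix (Fin 3) (Fin 3) (ZMod 2) := !![1,1,0; 0,1,0; 0,1,1]

/-- The matrix `Φ(r₂)` over `𝔽₂`. -/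
def M2 : Matrix (Fin 3) (Fin 3) (ZMod 2) := !![0,1,1; 1,0,1; 0,0,1]

/-- `(ℤ/2)³`, written multiplicatively. -/
abbrev V3 : Type := Multiplicative (Fin 3 → ZMod 2)

namespace SemidirectProduct

variable {N G : Type*} [Group N] [Group G] {φ : G →* MulAut N}

theorem mk_mul_of_map_eq_one {n : N} {g : G} (hg : φ g = 1) (a : N ⋊[φ] G) :
    (⟨n, g⟩ : N ⋊[φ] G) * a = ⟨n * a.left, g * a.right⟩ := by
  rw [mul_def, hg, MulAut.one_apply]

theorem mk_mul_self_eq_one {n : N} {g : G} (hg : φ g = 1) (hn : n * n = 1)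
    (hg2 : g * g = 1) : (⟨n, g⟩ : N ⋊[φ] G) * ⟨n, g⟩ = 1 := by
  rw [mk_mul_of_map_eq_one hg, hn, hg2]
  rfl

theorem commute_mk_of_map_eq_one {n m : N} {g h : G} (hg : φ g = 1) (hnm : Commute n m)
    (hgh : Commute g h) (hn : φ h n = n) :
    Commute (⟨n, g⟩ : N ⋊[φ] G) ⟨m, h⟩ := by
  change _ = _
  rw [mk_mul_of_map_eq_one hg, mul_def, hn, hnm.eq, hgh.eq]

end SemidirectProduct

namespace DihedralGroup

variable {n : ℕ} {i : ZMod n}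

theorem r_mul_self_eq_one (hi : i + i = 0) : r i * r i = 1 := by
  rw [r_mul_r, hi, r_zero]

theorem commute_r_of_add_self_eq_zero (hi : i + i = 0) (a : DihedralGroup n) :
    Commute (r i) a := by
  have hneg : -i = i := neg_eq_of_add_eq_zero_left hi
  change _ = _
  cases a with
  | r j => rw [r_mul_r, r_mul_r, add_comm]
  | sr j => rw [r_mul_sr, sr_mul_r, sub_eq_add_neg, hneg]

end DihedralGroup

theorem ZMod.natCast_add_self_eq_zero {n k : ℕ} (h : k + k = n) : (k : ZMod n) + k = 0 := by
  rw [← Nat.cast_add, h, ZMod.natCast_self]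

theorem MulAut.pow_apply_ofAdd_eq_mulVec {ι R : Type*} [Fintype ι] [DecidableEq ι]
    [CommRing R] {σ : MulAut (Multiplicative (ι → R))} {A : Matrix ι ι R}
    (hσ : ∀ v, σ (Multiplicative.ofAdd v) = Multiplicative.ofAdd (A.mulVec v)) (k : ℕ)
    (v : ι → R) : (σ ^ k) (Multiplicative.ofAdd v) = Multiplicative.ofAdd ((A ^ k).mulVec v) := by
  induction k generalizing v with
  | zero => simp
  | succ k ih => rw [pow_succ, MulAut.mul_apply, hσ, ih, Matrix.mulVec_mulVec, pow_succ]

theorem M1_mul_M2_pow_four : (M1 * M2) ^ 4 = 1 := by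
  rw [M1, M2]; decide

theorem M1_mulVec_e₁_add_e₃ : M1.mulVec ![1, 0, 1] = ![1, 0, 1] := by
  rw [M1]; decide

theorem M2_mulVec_e₁_add_e₃ : M2.mulVec ![1, 0, 1] = ![1, 0, 1] := by
  rw [M2]; decide

/-- Let `G = D_{2g+2} ⋉ (ℤ/2)³`, `g ≡ 3 (mod 4)`, with the action `Φ` given on the
generating reflections `r₁ = sr 0`, `r₂ = sr 1` by the matrices `M1` and `M2` over
`𝔽₂`.  Then `d = ((r₁r₂)^(g+1), e₁+e₃)` is a central involution of the subgroup
generated by `x = (r₁, e₁)` and `z = (r₂, e₁)`: `d² = 1` and `d` commutes with `x`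
and `z`. -/
theorem kulkarni_central_involution (g : ℕ) (hg : g % 4 = 3)
    (φ : DihedralGroup (2 * g + 2) →* MulAut V3)
    (h1 : ∀ v : Fin 3 → ZMod 2,
      φ (DihedralGroup.sr 0) (Multiplicative.ofAdd v) = Multiplicative.ofAdd (M1.mulVec v))
    (h2 : ∀ v : Fin 3 → ZMod 2,
      φ (DihedralGroup.sr 1) (Multiplicative.ofAdd v) = Multiplicative.ofAdd (M2.mulVec v)) :
    let d : V3 ⋊[φ] DihedralGroup (2 * g + 2) :=
      ⟨Multiplicative.ofAdd ![1, 0, 1], DihedralGroup.r ((g + 1 : ℕ) : ZMod (2 * g + 2))⟩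
    let x : V3 ⋊[φ] DihedralGroup (2 * g + 2) :=
      ⟨Multiplicative.ofAdd ![1, 0, 0], DihedralGroup.sr 0⟩
    let z : V3 ⋊[φ] DihedralGroup (2 * g + 2) :=
      ⟨Multiplicative.ofAdd ![1, 0, 0], DihedralGroup.sr 1⟩
    d * d = 1 ∧ d * x = x * d ∧ d * z = z * d := by
  intro d x z
  have hr1 (v : Fin 3 → ZMod 2) :
      φ (DihedralGroup.r 1) (Multiplicative.ofAdd v) = Multiplicative.ofAdd ((M1 * M2).mulVec v) := by
    rw [← sub_zero 1, ← DihedralGroup.sr_mul_sr, map_mul, MulAut.mul_apply, h2, h1,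
      Matrix.mulVec_mulVec]
  have hpow : (M1 * M2) ^ (g + 1) = 1 := by
    obtain ⟨k, hk⟩ : 4 ∣ g + 1 := by omega
    rw [hk, pow_mul, M1_mul_M2_pow_four, one_pow]
  have hact : φ (DihedralGroup.r ((g + 1 : ℕ) : ZMod (2 * g + 2))) = 1 := by
    ext v
    rw [← DihedralGroup.r_one_pow, map_pow, ← ofAdd_toAdd v,
      MulAut.pow_apply_ofAdd_eq_mulVec hr1, hpow, Matrix.one_mulVec]
    rfl
  have hhalf : ((g + 1 : ℕ) : ZMod (2 * g + 2)) + ((g + 1 : ℕ) : ZMod (2 * g + 2)) = 0 :=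
    ZMod.natCast_add_self_eq_zero (by ring)
  refine ⟨SemidirectProduct.mk_mul_self_eq_one hact (by decide)
      (DihedralGroup.r_mul_self_eq_one hhalf), ?_, ?_⟩
  · exact SemidirectProduct.commute_mk_of_map_eq_one hact (Commute.all _ _)
      (DihedralGroup.commute_r_of_add_self_eq_zero hhalf _) (by rw [h1, M1_mulVec_e₁_add_e₃])
  · exact SemidirectProduct.commute_mk_of_map_eq_one hact (Commute.all _ _)
      (DihedralGroup.commute_r_of_add_self_eq_zero hhalf _) (by rw [h2, M2_mulVec_e₁_add_e₃])
end

section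
/- With G = D_{2g+2} ⋉ (ℤ/2)³ as above (g ≡ 3 mod 4), a = (r₁r₂, 0) and b = (r₂, e₂), the relation b² a b² = a^{g+2} d holds, where d = ((r₁r₂)^{g+1}, e₁+e₃); consequently the quotient ⟨a,b,d⟩/⟨d⟩ satisfies the Kulkarni relations a^{2g+2} = b⁴ = (ab)² = 1 and b² a b² = a^{g+2}. -/
open DihedralGroup SemidirectProduct Multiplicative
open scoped Matrix

/-- The Kulkarni relations are the case `z = 1`. -/
structure KulkarniRelations {G : Type*} [Group G] (g : ℕ) (a b z : G) : Prop where
  pow_a : a ^ (2 * g + 2) = 1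
  pow_b : b ^ 4 = 1
  mul_sq : (a * b) ^ 2 = 1
  sq_mul_sq : b ^ 2 * a * b ^ 2 = a ^ (g + 2) * z

namespace KulkarniRelations

variable {G H : Type*} [Group G] [Group H] {g : ℕ} {a b z : G}

theorem map (f : G →* H) (h : KulkarniRelations g a b z) :
    KulkarniRelations g (f a) (f b) (f z) where
  pow_a := by rw [← map_pow, h.pow_a, map_one]
  pow_b := by rw [← map_pow, h.pow_b, map_one]
  mul_sq := by rw [← map_mul, ← map_pow, h.mul_sq, map_one]
  sq_mul_sq := by simp only [← map_pow, ← map_mul, h.sq_mul_sq]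

theorem of_injective (f : G →* H) (hf : Function.Injective f)
    (h : KulkarniRelations g (f a) (f b) (f z)) : KulkarniRelations g a b z where
  pow_a := hf <| by rw [map_pow, h.pow_a, map_one]
  pow_b := hf <| by rw [map_pow, h.pow_b, map_one]
  mul_sq := hf <| by rw [map_pow, map_mul, h.mul_sq, map_one]
  sq_mul_sq := hf <| by simp only [map_pow, map_mul, h.sq_mul_sq]

end KulkarniRelations

theorem MulAut.pow_apply_eq_self_of_apply_eq_self {N : Type*} [Group N] {σ : MulAut N} {x : N}
    (h : σ x = x) (k : ℕ) : (σ ^ k) x = x :=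
  (MulAction.stabilizer (MulAut N) x).pow_mem h k

theorem DihedralGroup.sr_zero_mul_sr_one {n : ℕ} : (sr 0 * sr 1 : DihedralGroup n) = r 1 := by
  rw [sr_mul_sr, sub_zero]

theorem DihedralGroup.sr_sq {n : ℕ} (i : ZMod n) : sr i ^ 2 = 1 := by
  rw [pow_two, sr_mul_self]

namespace SemidirectProduct

variable {N G : Type*} [Group N] [Group G] {φ : G →* MulAut N}

theorem mk_one_pow (s : G) (k : ℕ) : (⟨1, s⟩ : N ⋊[φ] G) ^ k = ⟨1, s ^ k⟩ :=
  (map_pow inr s k).symm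

theorem mk_sq (x : N) (s : G) : (⟨x, s⟩ : N ⋊[φ] G) ^ 2 = ⟨x * φ s x, s ^ 2⟩ := by
  rw [pow_two, pow_two]
  rfl

end SemidirectProduct

theorem V3.mul_self (x : V3) : x * x = 1 := by
  ext i
  exact CharTwo.add_self_eq_zero (toAdd x i)

section MatrixAction

variable {n : ℕ} {φ : DihedralGroup n →* MulAut V3}

theorem map_r_one_apply
    (h1 : ∀ v : Fin 3 → ZMod 2, φ (sr 0) (ofAdd v) = ofAdd (M1.mulVec v))
    (h2 : ∀ v : Fin 3 → ZMod 2, φ (sr 1) (ofAdd v) = ofAdd (M2.mulVec v)) (v : Fin 3 → ZMod 2) :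
    φ (r 1) (ofAdd v) = ofAdd ((M1 * M2) *ᵥ v) := by
  rw [← sr_zero_mul_sr_one, map_mul, MulAut.mul_apply, h2, h1, Matrix.mulVec_mulVec]

theorem map_r_natCast_apply_e₁_add_e₃
    (h1 : ∀ v : Fin 3 → ZMod 2, φ (sr 0) (ofAdd v) = ofAdd (M1.mulVec v))
    (h2 : ∀ v : Fin 3 → ZMod 2, φ (sr 1) (ofAdd v) = ofAdd (M2.mulVec v)) (k : ℕ) :
    φ (r k) (ofAdd ![1, 0, 1]) = ofAdd ![1, 0, 1] := by
  rw [← r_one_pow, map_pow]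
  refine MulAut.pow_apply_eq_self_of_apply_eq_self ?_ k
  rw [map_r_one_apply h1 h2]
  decide

theorem mk_e₂_sr_one_sq
    (h2 : ∀ v : Fin 3 → ZMod 2, φ (sr 1) (ofAdd v) = ofAdd (M2.mulVec v)) :
    (⟨ofAdd ![0, 1, 0], sr 1⟩ : V3 ⋊[φ] DihedralGroup n) ^ 2 = ⟨ofAdd ![1, 1, 0], 1⟩ := by
  rw [mk_sq, h2, sr_sq]
  congr
  decide

end MatrixAction

theorem kulkarniRelations_of_matrixAction {g : ℕ} {φ : DihedralGroup (2 * g + 2) →* MulAut V3}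
    (h1 : ∀ v : Fin 3 → ZMod 2, φ (sr 0) (ofAdd v) = ofAdd (M1.mulVec v))
    (h2 : ∀ v : Fin 3 → ZMod 2, φ (sr 1) (ofAdd v) = ofAdd (M2.mulVec v)) :
    KulkarniRelations g (⟨1, r 1⟩ : V3 ⋊[φ] DihedralGroup (2 * g + 2))
      ⟨ofAdd ![0, 1, 0], sr 1⟩ ⟨ofAdd ![1, 0, 1], r ((g + 1 : ℕ) : ZMod (2 * g + 2))⟩ where
  pow_a := by rw [mk_one_pow, r_one_pow_n]; rfl
  pow_b := by
    rw [show 4 = 2 * 2 from rfl, pow_mul, mk_e₂_sr_one_sq h2, mk_sq, map_one, one_pow,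
      MulAut.one_apply, V3.mul_self]
    rfl
  mul_sq := by
    have hab : (⟨1, r 1⟩ * ⟨ofAdd ![0, 1, 0], sr 1⟩ : V3 ⋊[φ] DihedralGroup (2 * g + 2)) =
        ⟨ofAdd ![1, 0, 0], sr 0⟩ := by
      ext : 1
      · simp only [mul_left, one_mul, map_r_one_apply h1 h2]
        decide
      · simp only [mul_right, r_mul_sr, sub_self]
    rw [hab, mk_sq, h1, sr_sq, show M1 *ᵥ ![1, 0, 0] = ![1, 0, 0] by decide, V3.mul_self]
    rfl
  sq_mul_sq := by
    rw [mk_e₂_sr_one_sq h2, mk_one_pow, r_one_pow]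
    ext : 1
    · simp only [mul_left, mul_right, map_one, one_mul, mul_one, map_r_one_apply h1 h2,
        map_r_natCast_apply_e₁_add_e₃ h1 h2, ← ofAdd_add]
      decide
    · have h0 : ((2 * g + 2 : ℕ) : ZMod (2 * g + 2)) = 0 := ZMod.natCast_self _
      simp only [mul_right, mul_one, one_mul, r_mul_r, r.injEq]
      push_cast at h0 ⊢
      linear_combination -h0

theorem kulkarni_relations_general (g : ℕ)
    (φ : DihedralGroup (2 * g + 2) →* MulAut V3)
    (h1 : ∀ v : Fin 3 → ZMod 2,
      φ (DihedralGroup.sr 0) (Multiplicative.ofAdd v) = Multiplicative.ofAdd (M1.mulVec v))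
    (h2 : ∀ v : Fin 3 → ZMod 2,
      φ (DihedralGroup.sr 1) (Multiplicative.ofAdd v) = Multiplicative.ofAdd (M2.mulVec v)) :
    let a : V3 ⋊[φ] DihedralGroup (2 * g + 2) := ⟨1, DihedralGroup.r 1⟩
    let b : V3 ⋊[φ] DihedralGroup (2 * g + 2) :=
      ⟨Multiplicative.ofAdd ![0, 1, 0], DihedralGroup.sr 1⟩
    let d : V3 ⋊[φ] DihedralGroup (2 * g + 2) :=
      ⟨Multiplicative.ofAdd ![1, 0, 1], DihedralGroup.r ((g + 1 : ℕ) : ZMod (2 * g + 2))⟩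
    a ^ (2 * g + 2) = 1 ∧ b ^ 4 = 1 ∧ (a * b) ^ 2 = 1 ∧
      b ^ 2 * a * b ^ 2 = a ^ (g + 2) * d ∧
      (∀ aS bS dS : Subgroup.closure {a, b, d},
        (aS : V3 ⋊[φ] DihedralGroup (2 * g + 2)) = a →
        (bS : V3 ⋊[φ] DihedralGroup (2 * g + 2)) = b →
        (dS : V3 ⋊[φ] DihedralGroup (2 * g + 2)) = d →
        let π := QuotientGroup.mk' (Subgroup.normalClosure ({dS} : Set (Subgroup.closure {a, b, d})))
        (π aS) ^ (2 * g + 2) = 1 ∧ (π bS) ^ 4 = 1 ∧ (π (aS * bS)) ^ 2 = 1 ∧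
          (π bS) ^ 2 * π aS * (π bS) ^ 2 = (π aS) ^ (g + 2)) := by
  intro a b d
  have hG : KulkarniRelations g a b d := kulkarniRelations_of_matrixAction h1 h2
  refine ⟨hG.pow_a, hG.pow_b, hG.mul_sq, hG.sq_mul_sq, ?_⟩
  intro aS bS dS ha hb hd π
  have hS : KulkarniRelations g aS bS dS := .of_injective _ Subtype.val_injective <| by
    rw [Subgroup.coe_subtype, ha, hb, hd]
    exact hG
  have hπd : π dS = 1 := (QuotientGroup.eq_one_iff dS).2 (Subgroup.subset_normalClosure rfl)
  have hQ := hS.map π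
  rw [hπd] at hQ
  exact ⟨hQ.pow_a, hQ.pow_b, map_mul π aS bS ▸ hQ.mul_sq, hQ.sq_mul_sq.trans (mul_one _)⟩

/-- Let `G = D_{2g+2} ⋉ (ℤ/2)³` (action on the reflections `r₁ = sr 0`, `r₂ = sr 1`
given by the matrices `M1`, `M2` over `𝔽₂`), `g ≡ 3 (mod 4)`,
`a = (r₁r₂, 0)`, `b = (r₂, e₂)` and `d = ((r₁r₂)^(g+1), e₁+e₃)`.  Then
`a^(2g+2) = b⁴ = (ab)² = 1` and `b² a b² = a^(g+2) d` hold in `G`; consequently, in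
the quotient of `⟨a, b, d⟩` by the normal subgroup generated by `d`, the Kulkarni
relations `a^(2g+2) = b⁴ = (ab)² = 1` and `b² a b² = a^(g+2)` hold. -/
theorem kulkarni_relations (g : ℕ) (hg : g % 4 = 3)
    (φ : DihedralGroup (2 * g + 2) →* MulAut V3)
    (h1 : ∀ v : Fin 3 → ZMod 2,
      φ (DihedralGroup.sr 0) (Multiplicative.ofAdd v) = Multiplicative.ofAdd (M1.mulVec v))
    (h2 : ∀ v : Fin 3 → ZMod 2,
      φ (DihedralGroup.sr 1) (Multiplicative.ofAdd v) = Multiplicative.ofAdd (M2.mulVec v)) :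
    let a : V3 ⋊[φ] DihedralGroup (2 * g + 2) := ⟨1, DihedralGroup.r 1⟩
    let b : V3 ⋊[φ] DihedralGroup (2 * g + 2) :=
      ⟨Multiplicative.ofAdd ![0, 1, 0], DihedralGroup.sr 1⟩
    let d : V3 ⋊[φ] DihedralGroup (2 * g + 2) :=
      ⟨Multiplicative.ofAdd ![1, 0, 1], DihedralGroup.r ((g + 1 : ℕ) : ZMod (2 * g + 2))⟩
    a ^ (2 * g + 2) = 1 ∧ b ^ 4 = 1 ∧ (a * b) ^ 2 = 1 ∧
      b ^ 2 * a * b ^ 2 = a ^ (g + 2) * d ∧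
      (∀ aS bS dS : Subgroup.closure {a, b, d},
        (aS : V3 ⋊[φ] DihedralGroup (2 * g + 2)) = a →
        (bS : V3 ⋊[φ] DihedralGroup (2 * g + 2)) = b →
        (dS : V3 ⋊[φ] DihedralGroup (2 * g + 2)) = d →
        let π := QuotientGroup.mk' (Subgroup.normalClosure ({dS} : Set (Subgroup.closure {a, b, d})))
        (π aS) ^ (2 * g + 2) = 1 ∧ (π bS) ^ 4 = 1 ∧ (π (aS * bS)) ^ 2 = 1 ∧
          (π bS) ^ 2 * π aS * (π bS) ^ 2 = (π aS) ^ (g + 2)) :=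
  kulkarni_relations_general g φ h1 h2
end

section
/- In the group D_{2g+2} ⋉ (ℤ/2)² with a = (r₁r₂, 0), b = (r₂, e₁) generating a copy of AM_g, the element (r₁, e₁+e₂) is an involution lying outside the subgroup ⟨a, b⟩ of index 2, and it normalizes ⟨a, b⟩. -/
open DihedralGroup SemidirectProduct

namespace DihedralGroup

def sign (n : ℕ) : DihedralGroup n →* Multiplicative (ZMod 2) where
  toFun
    | r _ => 1
    | sr _ => Multiplicative.ofAdd 1
  map_one' := rfl
  map_mul' x y := by
    cases x <;> cases y <;> simp only [r_mul_r, r_mul_sr, sr_mul_r, sr_mul_sr] <;> decide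

variable {n : ℕ}

@[simp] lemma sign_r (i : ZMod n) : sign n (r i) = 1 := rfl

@[simp] lemma sign_sr (i : ZMod n) : sign n (sr i) = Multiplicative.ofAdd 1 := rfl

theorem closure_sr_zero_sr_one :
    Subgroup.closure {sr 0, sr 1} = (⊤ : Subgroup (DihedralGroup n)) := by
  set H := Subgroup.closure {sr 0, (sr 1 : DihedralGroup n)}
  have h0 : sr 0 ∈ H := Subgroup.subset_closure (by simp)
  have h1 : sr 1 ∈ H := Subgroup.subset_closure (by simp)
  have hr : ∀ i, r i ∈ H := fun i => by
    rw [← ZMod.intCast_zmod_cast i, ← r_one_zpow]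
    exact zpow_mem (by simpa [sr_mul_sr] using mul_mem h0 h1) _
  refine eq_top_iff.mpr fun d _ => ?_
  cases d with
  | r i => exact hr i
  | sr i => simpa [sr_mul_r] using mul_mem h0 (hr i)

end DihedralGroup

theorem MulAut.apply_eq_of_closure_eq_top {G N α : Type*} [Group G] [Monoid N]
    (φ : G →* MulAut N) (f : N → α) {s : Set G} (hs : Subgroup.closure s = ⊤)
    (h : ∀ g ∈ s, ∀ v, f (φ g v) = f v) (g : G) (v : N) : f (φ g v) = f v := by
  have hg : g ∈ Subgroup.closure s := hs ▸ Subgroup.mem_top g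
  induction hg using Subgroup.closure_induction generalizing v with
  | mem g hg => exact h g hg v
  | one => simp
  | mul g₁ g₂ _ _ h₁ h₂ => rw [map_mul, MulAut.mul_apply, h₁, h₂]
  | inv g _ hg => rw [← hg, map_inv, MulAut.apply_inv_self]

theorem mulMonoidHom_dihedral_apply {n : ℕ} (φ : DihedralGroup n →* MulAut V2)
    (h0 : φ (sr 0) = 1) (h1 : φ (sr 1) = MulEquiv.prodComm) (d : DihedralGroup n) (v : V2) :
    mulMonoidHom (φ d v) = mulMonoidHom v :=
  MulAut.apply_eq_of_closure_eq_top φ _ closure_sr_zero_sr_one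
    (by rintro g (rfl | rfl) v <;> simp [h0, h1, mul_comm]) d v

section OrientationChar

variable {n : ℕ} {φ : DihedralGroup n →* MulAut V2}
  (hφ : ∀ d v, mulMonoidHom (φ d v) = mulMonoidHom v)

/-- Its kernel is the orientation-preserving subgroup `⟨a, b⟩`. -/
def orientationChar : V2 ⋊[φ] DihedralGroup n →* Multiplicative (ZMod 2) :=
  lift mulMonoidHom (sign n) fun d => by
    ext v; simp [hφ]

theorem orientationChar_apply (x : V2 ⋊[φ] DihedralGroup n) :
    orientationChar hφ x = x.left.1 * x.left.2 * sign n x.right := rfl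

theorem closure_eq_ker_orientationChar (h1 : φ (sr 1) = MulEquiv.prodComm) :
    Subgroup.closure {⟨1, r 1⟩, ⟨e₁, sr 1⟩} = (orientationChar hφ).ker := by
  set H := Subgroup.closure {(⟨1, r 1⟩ : V2 ⋊[φ] DihedralGroup n), ⟨e₁, sr 1⟩}
  have ha : ⟨1, r 1⟩ ∈ H := Subgroup.subset_closure (by simp)
  have hb : ⟨e₁, sr 1⟩ ∈ H := Subgroup.subset_closure (by simp)
  have hr : ∀ i, inr (r i) ∈ H := fun i => by
    rw [← ZMod.intCast_zmod_cast i, ← r_one_zpow, map_zpow]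
    exact zpow_mem ha _
  have he : inl e₁e₂ ∈ H := by
    convert mul_mem hb hb using 1
    ext <;> simp [h1] <;> decide
  have hrot : ∀ x ∈ (orientationChar hφ).ker, ∀ i, x.right = r i → x ∈ H := by
    intro x hx i hi
    have hv : x.left = 1 ∨ x.left = e₁e₂ := by
      rw [MonoidHom.mem_ker, orientationChar_apply, hi, sign_r, mul_one] at hx
      revert hx; generalize x.left = v; revert v; decide
    rw [← inl_left_mul_inr_right x, hi]
    rcases hv with hv | hv <;> rw [hv]
    · simpa using hr i
    · exact mul_mem he (hr i)
  have hle : H ≤ (orientationChar hφ).ker := (Subgroup.closure_le _).mpr <| by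
    rintro _ (rfl | rfl) <;> simp [orientationChar_apply, e₁]; decide
  refine le_antisymm hle fun x hx => ?_
  obtain ⟨v, _ | i⟩ := x
  · exact hrot _ hx _ rfl
  · -- right multiplication by `b` turns the reflection `sr i` into a rotation
    have hxb : (⟨v, sr i⟩ * ⟨e₁, sr 1⟩ : V2 ⋊[φ] DihedralGroup n) ∈ H :=
      hrot _ (mul_mem hx (hle hb)) _ (sr_mul_sr i 1)
    simpa only [mul_inv_cancel_right] using mul_mem hxb (inv_mem hb)

end OrientationChar

theorem MonoidHom.index_ker_eq_two {G : Type*} [Group G] (f : G →* Multiplicative (ZMod 2))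
    {t : G} (ht : f t ≠ 1) : f.ker.index = 2 := by
  refine Subgroup.index_eq_two_iff.mpr ⟨t, fun x => ?_⟩
  rw [MonoidHom.mem_ker, MonoidHom.mem_ker, map_mul]
  generalize f t = w at ht
  generalize f x = u
  revert u w
  decide

theorem am_orientation_reversing_involution_general (g : ℕ)
    (φ : DihedralGroup (2 * g + 2) →* MulAut V2)
    (h0 : φ (DihedralGroup.sr 0) = 1)
    (h1 : φ (DihedralGroup.sr 1) = (MulEquiv.prodComm : V2 ≃* V2)) :
    let a : V2 ⋊[φ] DihedralGroup (2 * g + 2) := ⟨1, DihedralGroup.r 1⟩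
    let b : V2 ⋊[φ] DihedralGroup (2 * g + 2) := ⟨e₁, DihedralGroup.sr 1⟩
    let t : V2 ⋊[φ] DihedralGroup (2 * g + 2) := ⟨e₁e₂, DihedralGroup.sr 0⟩
    t * t = 1 ∧ t ∉ Subgroup.closure {a, b} ∧
      (Subgroup.closure {a, b}).index = 2 ∧
      t ∈ Subgroup.normalizer ((Subgroup.closure {a, b} : Subgroup _) : Set _) := by
  intro a b t
  have hφ := mulMonoidHom_dihedral_apply φ h0 h1
  have hker : Subgroup.closure {a, b} = (orientationChar hφ).ker :=
    closure_eq_ker_orientationChar hφ h1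
  have ht : orientationChar hφ t ≠ 1 := by
    simp [t, orientationChar_apply, e₁e₂]; decide
  refine ⟨?_, hker ▸ ht, hker ▸ (orientationChar hφ).index_ker_eq_two ht, ?_⟩
  · ext <;> simp [t, h0, e₁e₂] <;> decide
  · rw [hker, Subgroup.normalizer_eq_top_iff.mpr (orientationChar hφ).normal_ker]
    exact Subgroup.mem_top t

/-- In `D_{2g+2} ⋉ (ℤ/2)²` (with `r₁ = sr 0` acting trivially and `r₂ = sr 1`
swapping the coordinates), with `a = (r₁r₂, 0)` and `b = (r₂, e₁)` generating a copy
of the Accola–Maclachlan group `AM_g`, the element `t = (r₁, e₁+e₂)` is an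
involution lying outside the subgroup `⟨a, b⟩`, which has index 2, and `t`
normalizes `⟨a, b⟩`. -/
theorem am_orientation_reversing_involution (g : ℕ) (hg : 2 ≤ g)
    (φ : DihedralGroup (2 * g + 2) →* MulAut V2)
    (h0 : φ (DihedralGroup.sr 0) = 1)
    (h1 : φ (DihedralGroup.sr 1) = (MulEquiv.prodComm : V2 ≃* V2)) :
    let a : V2 ⋊[φ] DihedralGroup (2 * g + 2) := ⟨1, DihedralGroup.r 1⟩
    let b : V2 ⋊[φ] DihedralGroup (2 * g + 2) := ⟨e₁, DihedralGroup.sr 1⟩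
    let t : V2 ⋊[φ] DihedralGroup (2 * g + 2) := ⟨e₁e₂, DihedralGroup.sr 0⟩
    t * t = 1 ∧ t ∉ Subgroup.closure {a, b} ∧
      (Subgroup.closure {a, b}).index = 2 ∧
      t ∈ Subgroup.normalizer ((Subgroup.closure {a, b} : Subgroup _) : Set _) :=
  am_orientation_reversing_involution_general g φ h0 h1
end
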